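/- Let V > 0, a < 0, D > 0 with V^2 + 2aD ≥ 0, and let t_pC > 0 satisfy V·t_pC > D. Let ϑ_b be the least positive real t with V·t + (1/2)·a·t^2 = D, and let ϑ_ub be the unique real ϑ ≤ t_pC with ϑ·V + V·(t_pC − ϑ) + (1/2)·a·(t_pC − ϑ)^2 = D. Then the additional time saved by pre-braking, t_Δ := ϑ_b − ϑ_ub, is given in closed form by t_Δ = (−V + √(V^2 + 2aD))/a − ( t_pC − √(2(V·t_pC − D)/(−a)) ). -/

import Mathlib

/-!
Braking from time 0, the vehicle covers `V t + a t² / 2`, so `ϑ_b` is the smaller root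
`(-V + √(V² + 2aD)) / a` of this quadratic; it is positive because `D > 0` forces
`√(V² + 2aD) < V`. Braking only from `ϑ`, the distance covered by `t_pC` is
`V t_pC + a (t_pC - ϑ)² / 2`, so `t_pC - ϑ_ub ≥ 0` is the square root of `2 (V t_pC - D) / (-a)`.
-/

open Real

lemma braking_distance_eq_iff {V a D : ℝ} (ha : a ≠ 0) (hdisc : 0 ≤ V ^ 2 + 2 * a * D) (t : ℝ) :
    V * t + (1 / 2) * a * t ^ 2 = D ↔
      t = (-V + √(V ^ 2 + 2 * a * D)) / a ∨ t = (-V - √(V ^ 2 + 2 * a * D)) / a := by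
  have hdiscrim : discrim (a / 2) V (-D) = √(V ^ 2 + 2 * a * D) * √(V ^ 2 + 2 * a * D) := by
    rw [mul_self_sqrt hdisc, discrim]
    ring
  have hroots := quadratic_eq_zero_iff (div_ne_zero ha two_ne_zero) hdiscrim t
  rw [mul_div_cancel₀ a two_ne_zero] at hroots
  rw [← hroots]
  constructor <;> intro h <;> linear_combination h

lemma sqrt_braking_discrim_lt {V a D : ℝ} (hV : 0 < V) (ha : a < 0) (hD : 0 < D) :
    √(V ^ 2 + 2 * a * D) < V := by
  rw [sqrt_lt' hV]
  nlinarith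

lemma isLeast_braking_time {V a D : ℝ} (hV : 0 < V) (ha : a < 0) (hD : 0 < D)
    (hdisc : 0 ≤ V ^ 2 + 2 * a * D) :
    IsLeast {t : ℝ | 0 < t ∧ V * t + (1 / 2) * a * t ^ 2 = D}
      ((-V + √(V ^ 2 + 2 * a * D)) / a) := by
  have hlt := sqrt_braking_discrim_lt hV ha hD
  have hroot_le : (-V + √(V ^ 2 + 2 * a * D)) / a ≤ (-V - √(V ^ 2 + 2 * a * D)) / a :=
    div_le_div_of_nonpos_of_le ha.le (by linarith [sqrt_nonneg (V ^ 2 + 2 * a * D)])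
  refine ⟨⟨div_pos_of_neg_of_neg (by linarith) ha, ?_⟩, ?_⟩
  · exact (braking_distance_eq_iff ha.ne hdisc _).2 (Or.inl rfl)
  · rintro t ⟨-, ht⟩
    rcases (braking_distance_eq_iff ha.ne hdisc t).1 ht with rfl | rfl
    · exact le_rfl
    · exact hroot_le

lemma eq_sub_sqrt_of_late_braking {V a D tpC ϑ : ℝ} (ha : a < 0) (hϑ : ϑ ≤ tpC)
    (hdist : ϑ * V + V * (tpC - ϑ) + (1 / 2) * a * (tpC - ϑ) ^ 2 = D) :
    ϑ = tpC - √(2 * (V * tpC - D) / (-a)) := by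
  have hsq : 2 * (V * tpC - D) / (-a) = (tpC - ϑ) ^ 2 := by
    rw [div_eq_iff (neg_ne_zero.2 ha.ne)]
    linear_combination 2 * hdist
  rw [hsq, sqrt_sq (sub_nonneg.2 hϑ)]
  ring

theorem additional_time_saved_by_prebraking_general
    (V a D tpC : ℝ) (hV : 0 < V) (ha : a < 0) (hD : 0 < D)
    (hdisc : 0 ≤ V ^ 2 + 2 * a * D)
    (ϑb ϑub tΔ : ℝ)
    (hϑb : IsLeast {t : ℝ | 0 < t ∧ V * t + (1 / 2) * a * t ^ 2 = D} ϑb)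
    (hϑub : ϑub ≤ tpC ∧
      ϑub * V + V * (tpC - ϑub) + (1 / 2) * a * (tpC - ϑub) ^ 2 = D)
    (htΔ : tΔ = ϑb - ϑub) :
    tΔ = (-V + Real.sqrt (V ^ 2 + 2 * a * D)) / a
          - (tpC - Real.sqrt (2 * (V * tpC - D) / (-a))) := by
  rw [htΔ, hϑb.unique (isLeast_braking_time hV ha hD hdisc),
    eq_sub_sqrt_of_late_braking ha hϑub.1 hϑub.2]

/-- Lemma 1 of the paper: With `V > 0`, `a < 0`, `D > 0`,
`V^2 + 2aD ≥ 0`, `t_pC > 0`, `V·t_pC > D`, if `ϑ_b` is the least positive `t`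
with `V·t + (1/2)·a·t^2 = D` and `ϑ_ub` is the unique `ϑ ≤ t_pC` with
`ϑ·V + V·(t_pC − ϑ) + (1/2)·a·(t_pC − ϑ)^2 = D`, then the additional time
saved by pre-braking `t_Δ = ϑ_b − ϑ_ub` has the closed form
`(−V + √(V^2 + 2aD))/a − (t_pC − √(2(V·t_pC − D)/(−a)))`. -/
theorem additional_time_saved_by_prebraking
    (V a D tpC : ℝ) (hV : 0 < V) (ha : a < 0) (hD : 0 < D)
    (hdisc : 0 ≤ V ^ 2 + 2 * a * D) (htpC : 0 < tpC) (hVD : V * tpC > D)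
    (ϑb ϑub tΔ : ℝ)
    (hϑb : IsLeast {t : ℝ | 0 < t ∧ V * t + (1 / 2) * a * t ^ 2 = D} ϑb)
    (hϑub : ϑub ≤ tpC ∧
      ϑub * V + V * (tpC - ϑub) + (1 / 2) * a * (tpC - ϑub) ^ 2 = D)
    (hϑub_unique : ∀ ϑ : ℝ, ϑ ≤ tpC →
      ϑ * V + V * (tpC - ϑ) + (1 / 2) * a * (tpC - ϑ) ^ 2 = D → ϑ = ϑub)
    (htΔ : tΔ = ϑb - ϑub) :
    tΔ = (-V + Real.sqrt (V ^ 2 + 2 * a * D)) / a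
          - (tpC - Real.sqrt (2 * (V * tpC - D) / (-a))) :=
  additional_time_saved_by_prebraking_general V a D tpC hV ha hD hdisc ϑb ϑub tΔ hϑb hϑub htΔ
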